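/- arXiv:0709.0390 — 2 statements merged into one kernel-verified Lean document; each statement's English description precedes it below -/
import Mathlib

section
/- Let γ = 1+2n̄ and δ = 2η√(n̄(1+n̄)) with n̄ > 0 and η ∈ [0,1]. Then (γ − δ²/γ)² ≥ 1 holds if and only if η ≤ √((1+2n̄)/(2(1+n̄))). -/
/-- For `γ = 1+2n̄`, `δ = 2η√(n̄(1+n̄))` with `n̄ > 0`, `η ∈ [0,1]`:
`(γ - δ²/γ)² ≥ 1` iff `η ≤ √((1+2n̄)/(2(1+n̄)))`. -/
theorem gaussian_steering_threshold (nbar η : ℝ) (hn : 0 < nbar)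
    (hη0 : 0 ≤ η) (hη1 : η ≤ 1) :
    ((1 + 2 * nbar) - (2 * η * Real.sqrt (nbar * (1 + nbar))) ^ 2 / (1 + 2 * nbar)) ^ 2 ≥ 1
      ↔ η ≤ Real.sqrt ((1 + 2 * nbar) / (2 * (1 + nbar))) := by
  have hγ : (0:ℝ) < 1 + 2 * nbar := by linarith
  have hs : Real.sqrt (nbar * (1 + nbar)) ^ 2 = nbar * (1 + nbar) :=
    Real.sq_sqrt (by nlinarith)
  have hq : (0:ℝ) ≤ (1 + 2 * nbar) / (2 * (1 + nbar)) := by positivity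
  rw [Real.le_sqrt hη0 hq, ge_iff_le, le_div_iff₀ (by positivity : (0:ℝ) < 2 * (1 + nbar))]
  have hexp : (1 + 2 * nbar) - (2 * η * Real.sqrt (nbar * (1 + nbar))) ^ 2 / (1 + 2 * nbar)
      = ((1 + 2 * nbar) ^ 2 - 4 * η ^ 2 * (nbar * (1 + nbar))) / (1 + 2 * nbar) := by
    rw [mul_pow, mul_pow, hs]
    field_simp
    ring
  rw [hexp, div_pow, one_le_div (by positivity)]
  set A := 4 * η ^ 2 * (nbar * (1 + nbar)) with hA_def
  set γ := 1 + 2 * nbar with hγ_def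
  have hη2 : η ^ 2 ≤ 1 := by nlinarith
  have hA : A ≤ γ ^ 2 - 1 := by
    rw [hA_def, hγ_def]; nlinarith
  have hAnn : 0 ≤ A := by rw [hA_def]; positivity
  constructor
  · intro h
    have hBγ : γ ≤ γ ^ 2 - A := by nlinarith
    have : A ≤ γ ^ 2 - γ := by linarith
    rw [hA_def, hγ_def] at this
    rw [hγ_def]
    nlinarith
  · intro h
    have : A ≤ γ ^ 2 - γ := by rw [hA_def, hγ_def]; nlinarith
    nlinarith
end

section
/- Let n, m, c, c' be reals with n > 1, m ≥ 1, subject to the physicality constraint [[n,0,c,0],[0,n,0,c'],[c,0,m,0],[0,c',0,m]] + iΣ ≥ 0. If (m − c²n/(n²−1))(m − c'²n/(n²−1)) ≥ (1 − cc'/(n²−1))² (separability), then (m − c²/n)(m − c'²/n) ≥ 1 (non-steerability); that is, steering implies entanglement. -/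
open Matrix ComplexOrder

set_option maxHeartbeats 1000000

/-- The standard-form two-mode Gaussian covariance matrix. -/
def stdCM (n m c c' : ℝ) : Matrix (Fin 4) (Fin 4) ℝ :=
  !![n, 0, c, 0; 0, n, 0, c'; c, 0, m, 0; 0, c', 0, m]

/-- The two-mode symplectic form `Σ = J ⊕ J`, `J = [[0,1],[-1,0]]`. -/
def sympl : Matrix (Fin 4) (Fin 4) ℝ :=
  !![0, 1, 0, 0; -1, 0, 0, 0; 0, 0, 0, 1; 0, 0, -1, 0]

lemma psd_det_nonneg' {k : ℕ} {M : Matrix (Fin k) (Fin k) ℂ} (hM : M.PosSemidef) : 0 ≤ M.det := by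
  have h : (0:ℝ) ≤ ∏ i, hM.1.eigenvalues i :=
    Finset.prod_nonneg fun i _ => hM.eigenvalues_nonneg i
  rw [hM.1.det_eq_prod_eigenvalues, ← RCLike.ofReal_prod]
  exact Complex.zero_le_real.2 h

set_option maxHeartbeats 2000000 in
lemma detCM (n m c c' : ℝ) :
    ((stdCM n m c c').map (fun x => (x : ℂ)) + Complex.I • (sympl.map (fun x => (x : ℂ)))).det
    = (((n*m - c^2)*(n*m - c'^2) + 1 - n^2 - m^2 - 2*c*c' : ℝ) : ℂ) := by
  have hM : (stdCM n m c c').map (fun x => (x : ℂ)) + Complex.I • (sympl.map (fun x => (x : ℂ)))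
      = !![(n:ℂ), Complex.I, c, 0; -Complex.I, n, 0, c'; c, 0, m, Complex.I; 0, c', -Complex.I, m] := by
    ext i j; fin_cases i <;> fin_cases j <;> simp [stdCM, sympl]
  rw [hM]
  simp [Matrix.det_succ_row_zero, Fin.sum_univ_succ, Fin.succAbove]
  apply Complex.ext <;> simp [← Complex.ofReal_pow]
  all_goals ring_nf

/-- Abstract infeasibility of the "both factors nonpositive" branch. -/
lemma branch2b_abs (n m D P Q : ℝ) (hn : 1 < n) (hm : 1 ≤ m)
    (hP0 : 0 ≤ P) (hQ0 : 0 ≤ Q) (hPm : P ≤ m) (hQm : Q ≤ m)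
    (hD0 : 0 < D) (hDge : n^2 - 1 ≤ D)
    (hPQ : D^2 ≤ P*Q)
    (hid : n^2*(n^2 - 1 - D)^2 = (m*(n^2-1) + P)*(m*(n^2-1) + Q)) : False := by
  have hm0 : (0:ℝ) < m := by linarith
  have hd : (0:ℝ) < n^2 - 1 := by nlinarith
  have hsum : 2*D ≤ P + Q := by nlinarith [sq_nonneg (P - Q), hPQ, hD0, hP0, hQ0]
  have hDm : D ≤ m := by nlinarith [hPQ, mul_le_mul hPm hQm hQ0 hm0.le, hD0]
  have hstar : m^2*(n^2-1)^2 + 2*m*(n^2-1)*D + D^2 ≤ n^2*(n^2 - 1 - D)^2 := by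
    nlinarith [hid, hPQ, mul_nonneg (mul_nonneg hm0.le hd.le)
      (by linarith : (0:ℝ) ≤ P + Q - 2*D)]
  have hdf : 0 ≤ (n^2-1)*(D^2 - 2*(n^2+m)*D + (n^2-1)*(n^2-m^2)) := by nlinarith [hstar]
  have hint : 0 ≤ (n^2-1)*((D - (n^2-1))*(2*n^2 + 2*m - D - (n^2-1))) :=
    mul_nonneg hd.le (mul_nonneg (by linarith) (by nlinarith))
  have hpos : 0 < (n^2-1)^2*(m+1)^2 := by positivity
  nlinarith [hdf, hint, hpos]

set_option maxHeartbeats 2000000 in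
/-- For a standard-form two-mode Gaussian covariance matrix satisfying the
physicality LMI `V + iΣ ≥ 0`, the separability condition
`(m − c²n/(n²−1))(m − c'²n/(n²−1)) ≥ (1 − cc'/(n²−1))²` implies the
non-steerability condition `(m − c²/n)(m − c'²/n) ≥ 1`. -/
theorem gaussian_separable_implies_not_steerable
    (n m c c' : ℝ) (hn : 1 < n) (hm : 1 ≤ m)
    (hphys : ((stdCM n m c c').map (fun x => (x : ℂ)) +
        Complex.I • (sympl.map (fun x => (x : ℂ)))).PosSemidef)
    (hsep : (m - c ^ 2 * n / (n ^ 2 - 1)) * (m - c' ^ 2 * n / (n ^ 2 - 1))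
        ≥ (1 - c * c' / (n ^ 2 - 1)) ^ 2) :
    (m - c ^ 2 / n) * (m - c' ^ 2 / n) ≥ 1 := by
  have hn0 : (0:ℝ) < n := by linarith
  have hm0 : (0:ℝ) < m := by linarith
  have hd : (0:ℝ) < n^2 - 1 := by nlinarith
  -- extract nm ≥ c², nm ≥ c'² from physicality
  have h2 : c^2 ≤ n*m := by
    have h := hphys.dotProduct_mulVec_nonneg ![(m:ℂ), 0, -(c:ℂ), 0]
    simp [dotProduct, Matrix.mulVec, Fin.sum_univ_four, stdCM, sympl, Matrix.add_apply,
      Matrix.smul_apply, Matrix.map_apply, Matrix.vecHead, Matrix.vecTail] at h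
    norm_cast at h
    nlinarith [h, hm0]
  have h3 : c'^2 ≤ n*m := by
    have h := hphys.dotProduct_mulVec_nonneg ![0, (m:ℂ), 0, -(c':ℂ)]
    simp [dotProduct, Matrix.mulVec, Fin.sum_univ_four, stdCM, sympl, Matrix.add_apply,
      Matrix.smul_apply, Matrix.map_apply, Matrix.vecHead, Matrix.vecTail] at h
    norm_cast at h
    nlinarith [h, hm0]
  -- extract the symplectic-eigenvalue condition from the determinant
  have h1 : 0 ≤ (n*m - c^2)*(n*m - c'^2) + 1 - n^2 - m^2 - 2*c*c' := by
    have hdet := psd_det_nonneg' hphys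
    rw [detCM] at hdet
    exact_mod_cast Complex.zero_le_real.1 hdet
  -- polynomial form of separability
  have hsep' : ((n^2-1) - c*c')^2 ≤ (n*(n*m - c^2) - m)*(n*(n*m - c'^2) - m) := by
    rw [ge_iff_le] at hsep
    have h := mul_le_mul_of_nonneg_right hsep (by positivity : (0:ℝ) ≤ (n^2-1)^2)
    have e1 : (1 - c*c'/(n^2-1))^2 * (n^2-1)^2 = ((n^2-1) - c*c')^2 := by
      field_simp
    have e2 : (m - c^2*n/(n^2-1)) * (m - c'^2*n/(n^2-1)) * (n^2-1)^2
        = (n*(n*m - c^2) - m)*(n*(n*m - c'^2) - m) := by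
      field_simp
      ring
    rw [e1, e2] at h
    exact h
  -- main key inequality
  have key : n^2 ≤ (n*m - c^2)*(n*m - c'^2) := by
    rcases le_or_gt (1 - m^2) (2*(c*c')) with hcase | hcase
    · nlinarith [h1]
    · have hD0 : (0:ℝ) < n^2 - 1 - c*c' := by nlinarith
      rcases le_or_gt (n*(n*m - c^2)) m with hP | hP
      · rcases le_or_gt (n*(n*m - c'^2)) m with hQ | hQ
        · exact (branch2b_abs n m (n^2 - 1 - c*c') (m - n*(n*m - c^2)) (m - n*(n*m - c'^2))
            hn hm (by linarith) (by linarith) (by nlinarith) (by nlinarith)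
            hD0 (by nlinarith) (by nlinarith [hsep']) (by ring)).elim
        · exfalso
          nlinarith [hsep', hD0, mul_nonneg (neg_nonneg.2 (by linarith : n*(n*m - c^2) - m ≤ 0))
            (by linarith : (0:ℝ) ≤ n*(n*m - c'^2) - m)]
      · have hQ : m < n*(n*m - c'^2) := by
          by_contra hq
          push_neg at hq
          nlinarith [hsep', hD0, mul_nonneg (by linarith : (0:ℝ) ≤ n*(n*m - c^2) - m)
            (neg_nonneg.2 (by linarith : n*(n*m - c'^2) - m ≤ 0))]
        -- branch 2a: use t = √(A·B)
        set A : ℝ := n*m - c^2 with hA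
        set B : ℝ := n*m - c'^2 with hB
        have hA0 : (0:ℝ) ≤ A := by rw [hA]; linarith
        have hB0 : (0:ℝ) ≤ B := by rw [hB]; linarith
        set t : ℝ := Real.sqrt (A*B) with ht
        have ht0 : 0 ≤ t := Real.sqrt_nonneg _
        have ht2 : t^2 = A*B := Real.sq_sqrt (mul_nonneg hA0 hB0)
        have htle : 2*t ≤ A + B := by
          have h' : t ≤ (A+B)/2 := by
            rw [ht]
            calc Real.sqrt (A*B) ≤ Real.sqrt (((A+B)/2)^2) :=
                  Real.sqrt_le_sqrt (by nlinarith [sq_nonneg (A - B)])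
              _ = (A+B)/2 := Real.sqrt_sq (by linarith)
          linarith
        have h4 : (n^2 - 1 - c*c')^2 ≤ (n*t - m)^2 := by
          nlinarith [hsep', ht2, mul_nonneg (mul_nonneg hn0.le hm0.le)
            (by linarith : (0:ℝ) ≤ A + B - 2*t)]
        have h5 : m ≤ n*t := by
          have hmm : m*m ≤ (n*A)*(n*B) := mul_le_mul hP.le hQ.le hm0.le (by nlinarith)
          nlinarith [hmm, ht2, mul_nonneg hn0.le ht0, hm0]
        have h6 : n^2 - 1 - c*c' ≤ n*t - m := by nlinarith [h4, h5, hD0]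
        have h7 : n^2 ≤ n*t := by nlinarith [h6, hm, hD0]
        nlinarith [h7, ht2, sq_nonneg (t - n), hn0]
  -- conclude
  have hn2 : (0:ℝ) < n^2 := by positivity
  have e : (m - c^2/n)*(m - c'^2/n) * n^2 = (n*m - c^2)*(n*m - c'^2) := by
    field_simp
  rw [ge_iff_le, ← mul_le_mul_iff_left₀ hn2, one_mul, e]
  linarith [key]
end
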